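/- For every integer n ≥ 1 and every x > 0, the Gaussian tail integral satisfies the lower bound ((h'_{n-1}(x) + g_{n-1}(x)) / (g'_{n-1}(x) + x g_{n-1}(x))) · exp(-x²/2) ≤ ∫_x^∞ exp(-t²/2) dt. -/

import Mathlib

open Nat Finset MeasureTheory Real Filter

noncomputable def gp (n : ℕ) (x : ℝ) : ℝ :=
  ∑ i ∈ Finset.range (n+1), ((2*n+1)! : ℝ) / ((2*(n-i))‼ * (2*i+1)!) * x^(2*i+1)

noncomputable def hp (n : ℕ) (x : ℝ) : ℝ :=
  ∑ i ∈ Finset.range (n+1), ((n+i)! * (n-i)! : ℝ) / ((2*(n-i))‼ * (2*i)!) *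
    (∑ j ∈ Finset.range (n-i+1), ((2*n+1).choose j : ℝ)) * x^(2*i)

noncomputable def ap (m i : ℕ) : ℝ := ((2*m+1)! : ℝ) / ((2*(m-i))‼ * (2*i+1)!)
noncomputable def Sp (m i : ℕ) : ℝ := ∑ j ∈ Finset.range (m-i+1), ((2*m+1).choose j : ℝ)
noncomputable def bp (m i : ℕ) : ℝ := ((m+i)! * (m-i)! : ℝ) / ((2*(m-i))‼ * (2*i)!) * Sp m i

noncomputable def bq (m i : ℕ) : ℝ := ((m+i)! * (m-i)! : ℝ) / ((2*(m-i))‼ * (2*i)!)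

lemma bp_eq (m i : ℕ) : bp m i = bq m i * Sp m i := rfl


lemma gp_eq (m : ℕ) (x : ℝ) : gp m x = ∑ i ∈ range (m+1), ap m i * x^(2*i+1) := rfl
lemma hp_eq (m : ℕ) (x : ℝ) : hp m x = ∑ i ∈ range (m+1), bp m i * x^(2*i) := by
  unfold hp bp Sp; rfl

noncomputable def gp1 (m : ℕ) (x : ℝ) : ℝ :=
  ∑ i ∈ range (m+1), (2*(i:ℝ)+1) * ap m i * x^(2*i)
noncomputable def gp2 (m : ℕ) (x : ℝ) : ℝ :=
  ∑ i ∈ range (m+1), (2*(i:ℝ)+1) * (2*(i:ℝ)) * ap m i * x^(2*i-1)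
noncomputable def hp1 (m : ℕ) (x : ℝ) : ℝ :=
  ∑ i ∈ range (m+1), (2*(i:ℝ)) * bp m i * x^(2*i-1)
noncomputable def hp2 (m : ℕ) (x : ℝ) : ℝ :=
  ∑ i ∈ range (m+1), (2*(i:ℝ)) * (2*(i:ℝ)-1) * bp m i * x^(2*i-2)

lemma gp_hasDeriv (m : ℕ) (x : ℝ) : HasDerivAt (gp m) (gp1 m x) x := by
  have : HasDerivAt (fun y => ∑ i ∈ range (m+1), ap m i * y^(2*i+1))
      (∑ i ∈ range (m+1), (2*(i:ℝ)+1) * ap m i * x^(2*i)) x := by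
    apply HasDerivAt.fun_sum
    intro i _
    have h := (hasDerivAt_pow (2*i+1) x).const_mul (ap m i)
    refine h.congr_deriv ?_
    have : 2*i+1-1 = 2*i := by omega
    rw [this]; push_cast; ring
  exact this

lemma gp1_hasDeriv (m : ℕ) (x : ℝ) : HasDerivAt (gp1 m) (gp2 m x) x := by
  apply HasDerivAt.fun_sum
  intro i _
  have h := (hasDerivAt_pow (2*i) x).const_mul ((2*(i:ℝ)+1) * ap m i)
  refine h.congr_deriv ?_
  push_cast; ring

lemma hp_hasDeriv (m : ℕ) (x : ℝ) : HasDerivAt (hp m) (hp1 m x) x := by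
  have : HasDerivAt (fun y => ∑ i ∈ range (m+1), bp m i * y^(2*i))
      (∑ i ∈ range (m+1), (2*(i:ℝ)) * bp m i * x^(2*i-1)) x := by
    apply HasDerivAt.fun_sum
    intro i _
    have h := (hasDerivAt_pow (2*i) x).const_mul (bp m i)
    refine h.congr_deriv ?_
    push_cast; ring
  have he : hp m = fun y => ∑ i ∈ range (m+1), bp m i * y^(2*i) := by
    funext y; exact hp_eq m y
  rw [he]; exact this

lemma hp1_hasDeriv (m : ℕ) (x : ℝ) : HasDerivAt (hp1 m) (hp2 m x) x := by
  apply HasDerivAt.fun_sum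
  intro i _
  rcases Nat.eq_zero_or_pos i with hi | hi
  · subst hi
    simpa using hasDerivAt_const x (0:ℝ)
  · have h := (hasDerivAt_pow (2*i-1) x).const_mul ((2*(i:ℝ)) * bp m i)
    have h1 : 2*i-1-1 = 2*i-2 := by omega
    have h2 : ((2*i-1 : ℕ) : ℝ) = 2*(i:ℝ)-1 := by
      have h3 : (1:ℕ) ≤ 2*i := by omega
      push_cast [h3]; ring
    rw [h1, h2] at h
    refine h.congr_deriv ?_
    ring

noncomputable def G (x : ℝ) : ℝ := ∫ t in Set.Ioi x, Real.exp (-t^2/2)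

lemma gauss_eq : (fun t : ℝ => Real.exp (-t^2/2)) = fun t => Real.exp (-(1/2) * t^2) := by
  funext t; ring_nf

lemma integrable_gauss : Integrable (fun t : ℝ => Real.exp (-t^2/2)) := by
  rw [gauss_eq]; exact integrable_exp_neg_mul_sq (by norm_num)

lemma continuous_gauss : Continuous (fun t : ℝ => Real.exp (-t^2/2)) := by
  continuity

lemma G_nonneg (x : ℝ) : 0 ≤ G x := by
  apply integral_nonneg
  intro t; positivity

lemma G_split (a b : ℝ) (hab : a ≤ b) : G a = (∫ t in a..b, Real.exp (-t^2/2)) + G b := by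
  rw [intervalIntegral.integral_of_le hab]
  unfold G
  rw [← MeasureTheory.setIntegral_union (Set.Ioc_disjoint_Ioi le_rfl) measurableSet_Ioi
    integrable_gauss.integrableOn integrable_gauss.integrableOn]
  rw [Set.Ioc_union_Ioi_eq_Ioi hab]

lemma G_repr (y : ℝ) : G y = (∫ t in y..(0:ℝ), Real.exp (-t^2/2)) + G 0 := by
  rcases le_or_gt y 0 with h | h
  · exact G_split y 0 h
  · have h1 := G_split 0 y h.le
    have h2 : (∫ t in y..(0:ℝ), Real.exp (-t^2/2)) = -∫ t in (0:ℝ)..y, Real.exp (-t^2/2) :=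
      intervalIntegral.integral_symm 0 y
    rw [h2]; linarith

lemma G_hasDeriv (x : ℝ) : HasDerivAt G (-(Real.exp (-x^2/2))) x := by
  have h : HasDerivAt (fun y => (∫ t in y..(0:ℝ), Real.exp (-t^2/2)) + G 0)
      (-(Real.exp (-x^2/2))) x := by
    apply HasDerivAt.add_const
    exact intervalIntegral.integral_hasDerivAt_left
      (integrable_gauss.intervalIntegrable)
      (continuous_gauss.aestronglyMeasurable.stronglyMeasurableAtFilter)
      continuous_gauss.continuousAt
  have he : G = fun y => (∫ t in y..(0:ℝ), Real.exp (-t^2/2)) + G 0 := by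
    funext y; exact G_repr y
  rw [he]; exact h

lemma integrable_t_gauss : Integrable (fun t : ℝ => t * Real.exp (-t^2/2)) := by
  have h : (fun t : ℝ => t * Real.exp (-t^2/2)) = fun t => t ^ 1 * Real.exp (-(1/2) * t^2) := by
    funext t; ring_nf
  rw [h]
  simpa using integrable_mul_exp_neg_mul_sq (by norm_num : (0:ℝ) < 1/2)

lemma G_le (x : ℝ) (hx : 1 ≤ x) : G x ≤ Real.exp (-x^2/2) := by
  have key : (∫ t in Set.Ioi x, t * Real.exp (-t^2/2)) = Real.exp (-x^2/2) := by
    have hd : ∀ t ∈ Set.Ici x, HasDerivAt (fun t => -Real.exp (-t^2/2))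
        (t * Real.exp (-t^2/2)) t := by
      intro t _
      have h1 : HasDerivAt (fun t : ℝ => -t^2/2) (-t) t := by
        have := ((hasDerivAt_pow 2 t).div_const 2).fun_neg
        have e : (fun t : ℝ => -t^2/2) = fun i => -(i^2/2) := by funext y; ring
        rw [e]; exact this.congr_deriv (by norm_num)
      have := (h1.exp).fun_neg
      exact this.congr_deriv (by ring)
    have hint : IntegrableOn (fun t : ℝ => t * Real.exp (-t^2/2)) (Set.Ioi x) :=
      integrable_t_gauss.integrableOn
    have hten : Filter.Tendsto (fun t => -Real.exp (-t^2/2)) atTop (nhds 0) := by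
      rw [show (0:ℝ) = -0 by norm_num]
      apply Filter.Tendsto.neg
      apply Real.tendsto_exp_atBot.comp
      have h1 : Filter.Tendsto (fun t : ℝ => t^2/2) atTop atTop :=
        (tendsto_pow_atTop (two_ne_zero)).atTop_div_const (by norm_num)
      have h2 := tendsto_neg_atTop_atBot.comp h1
      convert h2 using 1
      funext t; simp [Function.comp]; ring
    have := MeasureTheory.integral_Ioi_of_hasDerivAt_of_tendsto' hd hint hten
    rw [this]; ring_nf
  rw [← key]
  apply MeasureTheory.setIntegral_mono_on integrable_gauss.integrableOn
    integrable_t_gauss.integrableOn measurableSet_Ioi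
  intro t ht
  have h1 : 1 ≤ t := le_trans hx (le_of_lt ht)
  nlinarith [Real.exp_pos (-t^2/2)]

def PL (f : ℝ → ℝ) : Prop := ∃ C K, ∀ x : ℝ, 1 ≤ x → |f x| ≤ C * x ^ K

lemma PL_sum (N : ℕ) (c : ℕ → ℝ) (e : ℕ → ℕ) :
    PL (fun x => ∑ i ∈ range N, c i * x ^ e i) := by
  refine ⟨∑ i ∈ range N, |c i|, (range N).sup e, fun x hx => ?_⟩
  calc |∑ i ∈ range N, c i * x ^ e i| ≤ ∑ i ∈ range N, |c i * x ^ e i| :=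
        Finset.abs_sum_le_sum_abs _ _
    _ ≤ ∑ i ∈ range N, |c i| * x ^ (range N).sup e := by
        apply Finset.sum_le_sum
        intro i hi
        rw [abs_mul, abs_pow, abs_of_nonneg (by linarith : (0:ℝ) ≤ x)]
        apply mul_le_mul_of_nonneg_left _ (abs_nonneg _)
        exact pow_le_pow_right₀ hx (Finset.le_sup hi)
    _ = (∑ i ∈ range N, |c i|) * x ^ (range N).sup e := by rw [Finset.sum_mul]

lemma PL_add {f g : ℝ → ℝ} (hf : PL f) (hg : PL g) : PL (fun x => f x + g x) := by
  obtain ⟨C1, K1, h1⟩ := hf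
  obtain ⟨C2, K2, h2⟩ := hg
  refine ⟨|C1| + |C2|, K1 + K2 + 1, fun x hx => ?_⟩
  have hx0 : (0:ℝ) ≤ x := by linarith
  have e1 : x ^ K1 ≤ x ^ (K1+K2+1) := pow_le_pow_right₀ hx (by omega)
  have e2 : x ^ K2 ≤ x ^ (K1+K2+1) := pow_le_pow_right₀ hx (by omega)
  have p1 : (0:ℝ) < x ^ K1 := pow_pos (by linarith) _
  have p2 : (0:ℝ) < x ^ K2 := pow_pos (by linarith) _
  have := h1 x hx; have := h2 x hx
  have a1 : |f x| ≤ |C1| * x ^ (K1+K2+1) := by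
    calc |f x| ≤ C1 * x ^ K1 := h1 x hx
      _ ≤ |C1| * x ^ K1 := by
          apply mul_le_mul_of_nonneg_right (le_abs_self _) (le_of_lt p1)
      _ ≤ |C1| * x ^ (K1+K2+1) := mul_le_mul_of_nonneg_left e1 (abs_nonneg _)
  have a2 : |g x| ≤ |C2| * x ^ (K1+K2+1) := by
    calc |g x| ≤ C2 * x ^ K2 := h2 x hx
      _ ≤ |C2| * x ^ K2 := mul_le_mul_of_nonneg_right (le_abs_self _) (le_of_lt p2)
      _ ≤ |C2| * x ^ (K1+K2+1) := mul_le_mul_of_nonneg_left e2 (abs_nonneg _)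
  calc |f x + g x| ≤ |f x| + |g x| := abs_add_le _ _
    _ ≤ (|C1| + |C2|) * x ^ (K1+K2+1) := by rw [add_mul]; exact add_le_add a1 a2

lemma tendsto_pow_gauss (k : ℕ) :
    Filter.Tendsto (fun x : ℝ => x ^ k * Real.exp (-x^2/2)) atTop (nhds 0) := by
  have hbase := Real.tendsto_pow_mul_exp_neg_atTop_nhds_zero k
  apply squeeze_zero_norm' _ hbase
  filter_upwards [Filter.eventually_ge_atTop (2:ℝ)] with x hx
  have hx0 : (0:ℝ) < x := by linarith
  rw [Real.norm_eq_abs, abs_mul, abs_pow, abs_of_pos hx0,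
    abs_of_pos (Real.exp_pos _)]
  apply mul_le_mul_of_nonneg_left _ (by positivity)
  apply Real.exp_le_exp.2
  nlinarith

lemma tendsto_PL_exp {f : ℝ → ℝ} (hf : PL f) :
    Filter.Tendsto (fun x => f x * Real.exp (-x^2/2)) atTop (nhds 0) := by
  obtain ⟨C, K, h⟩ := hf
  have hbase := (tendsto_pow_gauss K).const_mul |C|
  rw [mul_zero] at hbase
  apply squeeze_zero_norm' _ hbase
  filter_upwards [Filter.eventually_ge_atTop (1:ℝ)] with x hx
  have hx0 : (0:ℝ) < x := by linarith
  rw [Real.norm_eq_abs, abs_mul, abs_of_pos (Real.exp_pos _), ← mul_assoc]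
  apply mul_le_mul_of_nonneg_right _ (le_of_lt (Real.exp_pos _))
  calc |f x| ≤ C * x ^ K := h x hx
    _ ≤ |C| * x ^ K := mul_le_mul_of_nonneg_right (le_abs_self _) (by positivity)

lemma tendsto_PL_G {f : ℝ → ℝ} (hf : PL f) :
    Filter.Tendsto (fun x => f x * G x) atTop (nhds 0) := by
  obtain ⟨C, K, h⟩ := hf
  have hbase := (tendsto_pow_gauss K).const_mul |C|
  rw [mul_zero] at hbase
  apply squeeze_zero_norm' _ hbase
  filter_upwards [Filter.eventually_ge_atTop (1:ℝ)] with x hx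
  have hx0 : (0:ℝ) < x := by linarith
  rw [Real.norm_eq_abs, abs_mul, ← mul_assoc]
  have hGa : |G x| ≤ Real.exp (-x^2/2) := by
    rw [abs_of_nonneg (G_nonneg x)]; exact G_le x hx
  calc |f x| * |G x| ≤ (|C| * x ^ K) * Real.exp (-x^2/2) := by
        apply mul_le_mul _ hGa (abs_nonneg _) (by positivity)
        calc |f x| ≤ C * x ^ K := h x hx
          _ ≤ |C| * x ^ K := mul_le_mul_of_nonneg_right (le_abs_self _) (by positivity)
    _ = |C| * x ^ K * Real.exp (-x^2/2) := rfl

lemma PL_gp (m : ℕ) : PL (gp m) := by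
  have : gp m = fun x => ∑ i ∈ range (m+1), ap m i * x ^ (2*i+1) := by
    funext x; exact gp_eq m x
  rw [this]; exact PL_sum _ _ _

lemma PL_gp1 (m : ℕ) : PL (gp1 m) := by
  have : gp1 m = fun x => ∑ i ∈ range (m+1), ((2*(i:ℝ)+1) * ap m i) * x ^ (2*i) := by
    funext x; unfold gp1; apply Finset.sum_congr rfl; intros; ring
  rw [this]; exact PL_sum _ _ _

lemma PL_hp (m : ℕ) : PL (hp m) := by
  have : hp m = fun x => ∑ i ∈ range (m+1), bp m i * x ^ (2*i) := by
    funext x; exact hp_eq m x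
  rw [this]; exact PL_sum _ _ _

lemma PL_hp1 (m : ℕ) : PL (hp1 m) := by
  have : hp1 m = fun x => ∑ i ∈ range (m+1), ((2*(i:ℝ)) * bp m i) * x ^ (2*i-1) := by
    funext x; unfold hp1; apply Finset.sum_congr rfl; intros; ring
  rw [this]; exact PL_sum _ _ _

lemma PL_xgp (m : ℕ) : PL (fun x => x * gp m x) := by
  have : (fun x => x * gp m x) = fun x => ∑ i ∈ range (m+1), ap m i * x ^ (2*i+2) := by
    funext x; rw [gp_eq, Finset.mul_sum]; apply Finset.sum_congr rfl; intros; ring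
  rw [this]
  have := PL_sum (m+1) (fun i => ap m i) (fun i => 2*i+2)
  exact this

noncomputable def Dm (m : ℕ) (x : ℝ) : ℝ :=
  (gp1 m x + x * gp m x) * G x - (hp1 m x + gp m x) * Real.exp (-x^2/2)
noncomputable def Em (m : ℕ) (x : ℝ) : ℝ :=
  gp m x * G x - hp m x * Real.exp (-x^2/2)

lemma tendsto_Dm (m : ℕ) : Filter.Tendsto (Dm m) atTop (nhds 0) := by
  have h1 := tendsto_PL_G (PL_add (PL_gp1 m) (PL_xgp m))
  have h2 := tendsto_PL_exp (PL_add (PL_hp1 m) (PL_gp m))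
  have := h1.sub h2
  rw [sub_zero] at this
  exact this

lemma tendsto_Em (m : ℕ) : Filter.Tendsto (Em m) atTop (nhds 0) := by
  have h1 := tendsto_PL_G (PL_gp m)
  have h2 := tendsto_PL_exp (PL_hp m)
  have := h1.sub h2
  rw [sub_zero] at this
  exact this

lemma gaussfn_hasDeriv (x : ℝ) :
    HasDerivAt (fun y : ℝ => Real.exp (-y^2/2)) (-x * Real.exp (-x^2/2)) x := by
  have h1 : HasDerivAt (fun y : ℝ => -y^2/2) (-x) x := by
    have := ((hasDerivAt_pow 2 x).div_const 2).fun_neg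
    have e : (fun y : ℝ => -y^2/2) = fun i => -(i^2/2) := by funext y; ring
    rw [e]; exact this.congr_deriv (by norm_num)
  have := h1.exp
  exact this.congr_deriv (by ring)

lemma L1 (m i : ℕ) (h : i < m) :
    (2*(i:ℝ)+3) * (2*(i:ℝ)+2) * ap m (i+1) = (2*(m:ℝ)-2*(i:ℝ)) * ap m i := by
  obtain ⟨k, rfl⟩ : ∃ k, m = i + 1 + k := ⟨m - i - 1, by omega⟩
  unfold ap
  rw [show i+1+k-(i+1) = k from by omega, show i+1+k-i = k+1 from by omega]
  rw [show 2*(i+1)+1 = (2*i+1)+1+1 from by ring]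
  rw [Nat.factorial_succ ((2*i+1)+1), Nat.factorial_succ (2*i+1)]
  rw [show 2*(k+1) = 2*k+2 from by ring, Nat.doubleFactorial_add_two]
  push_cast
  have h1 : ((2*k)‼ : ℝ) ≠ 0 := by exact_mod_cast (Nat.doubleFactorial_pos _).ne'
  have h2 : ((2*i+1)! : ℝ) ≠ 0 := by exact_mod_cast (Nat.factorial_pos _).ne'
  field_simp
  ring

lemma idI (m : ℕ) (x : ℝ) : gp2 m x + x * gp1 m x = (2*(m:ℝ)+1) * gp m x := by
  have e2 : gp2 m x = ∑ i ∈ range m, (2*(m:ℝ)-2*(i:ℝ)) * ap m i * x^(2*i+1) := by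
    unfold gp2
    rw [Finset.sum_range_succ']
    have h0 : (2*((0:ℕ):ℝ)+1) * (2*((0:ℕ):ℝ)) * ap m 0 * x^(2*0-1) = 0 := by
      norm_num
    rw [h0, add_zero]
    apply Finset.sum_congr rfl
    intro i hi
    have he : 2*(i+1)-1 = 2*i+1 := by omega
    rw [he]
    have := L1 m i (mem_range.1 hi)
    push_cast
    linear_combination x^(2*i+1) * this
  have e1 : x * gp1 m x = ∑ i ∈ range (m+1), (2*(i:ℝ)+1) * ap m i * x^(2*i+1) := by
    unfold gp1
    rw [Finset.mul_sum]
    apply Finset.sum_congr rfl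
    intro i _
    ring
  have e3 : (2*(m:ℝ)+1) * gp m x = ∑ i ∈ range (m+1), (2*(m:ℝ)+1) * (ap m i * x^(2*i+1)) := by
    rw [gp_eq, Finset.mul_sum]
  rw [e2, e1, e3, Finset.sum_range_succ _ m, Finset.sum_range_succ _ m]
  rw [← add_assoc, ← Finset.sum_add_distrib]
  have e4 : ∑ i ∈ range m, ((2*(m:ℝ)-2*(i:ℝ)) * ap m i * x^(2*i+1)
      + (2*(i:ℝ)+1) * ap m i * x^(2*i+1))
      = ∑ i ∈ range m, (2*(m:ℝ)+1) * (ap m i * x^(2*i+1)) := by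
    apply Finset.sum_congr rfl
    intro i _
    ring
  rw [e4]
  ring

lemma L2 (m i : ℕ) (h : i < m) :
    (2*(i:ℝ)+2)*(2*(i:ℝ)+1)*bp m (i+1) + 2*(2*(i:ℝ)+1)*ap m i
      = (2*(m:ℝ)+2*(i:ℝ)+2) * bp m i := by
  obtain ⟨k, rfl⟩ : ∃ k, m = i + 1 + k := ⟨m - i - 1, by omega⟩
  unfold bp ap Sp
  rw [show i+1+k-(i+1) = k from by omega, show i+1+k-i = k+1 from by omega,
      show i+1+k+(i+1) = (i+1+k+i)+1 from by omega]
  -- split the longer binomial sum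
  rw [Finset.sum_range_succ (fun j => (((2*(i+1+k)+1).choose j : ℕ) : ℝ)) (k+1)]
  rw [Nat.cast_choose ℝ (show k+1 ≤ 2*(i+1+k)+1 from by omega)]
  rw [show 2*(i+1+k)+1-(k+1) = (i+1+k+i)+1 from by omega]
  -- factorial expansions
  rw [Nat.factorial_succ (i+1+k+i)]
  rw [show 2*(i+1) = (2*i+1)+1 from by omega, Nat.factorial_succ (2*i+1),
      Nat.factorial_succ (2*i), Nat.factorial_succ k]
  rw [show 2*(k+1) = 2*k+2 from by omega, Nat.doubleFactorial_add_two]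
  push_cast
  have h1 : ((2*k)‼ : ℝ) ≠ 0 := by exact_mod_cast (Nat.doubleFactorial_pos _).ne'
  have h2 : ((2*i)! : ℝ) ≠ 0 := by exact_mod_cast (Nat.factorial_pos _).ne'
  have h3 : ((k)! : ℝ) ≠ 0 := by exact_mod_cast (Nat.factorial_pos _).ne'
  have h4 : ((i+1+k+i)! : ℝ) ≠ 0 := by exact_mod_cast (Nat.factorial_pos _).ne'
  field_simp
  ring

lemma ap_self (m : ℕ) : ap m m = 1 := by
  unfold ap
  rw [Nat.sub_self, Nat.mul_zero, show (Nat.doubleFactorial 0) = 1 from rfl]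
  rw [Nat.cast_one, one_mul]
  exact div_self (Nat.cast_ne_zero.2 (Nat.factorial_pos _).ne')

lemma bp_self (m : ℕ) : bp m m = 1 := by
  unfold bp Sp
  rw [Nat.sub_self, Nat.mul_zero, show (Nat.doubleFactorial 0) = 1 from rfl]
  rw [Finset.sum_range_one, Nat.choose_zero_right]
  rw [show m + m = 2*m from by ring]
  norm_num
  exact (Nat.factorial_pos _).ne'

lemma idII (m : ℕ) (x : ℝ) :
    hp2 m x + 2 * gp1 m x = x * hp1 m x + (2*(m:ℝ)+2) * hp m x := by
  have e2 : hp2 m x = ∑ i ∈ range m,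
      (2*(i:ℝ)+2) * (2*(i:ℝ)+1) * bp m (i+1) * x^(2*i) := by
    unfold hp2
    rw [Finset.sum_range_succ']
    have h0 : (2*((0:ℕ):ℝ)) * (2*((0:ℕ):ℝ)-1) * bp m 0 * x^(2*0-2) = 0 := by norm_num
    rw [h0, add_zero]
    apply Finset.sum_congr rfl
    intro i _
    have he : 2*(i+1)-2 = 2*i := by omega
    rw [he]
    push_cast
    ring
  have e1 : 2 * gp1 m x = ∑ i ∈ range (m+1), 2*(2*(i:ℝ)+1) * ap m i * x^(2*i) := by
    unfold gp1; rw [Finset.mul_sum]; apply Finset.sum_congr rfl; intros; ring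
  have e3 : x * hp1 m x = ∑ i ∈ range (m+1), (2*(i:ℝ)) * bp m i * x^(2*i) := by
    unfold hp1; rw [Finset.mul_sum]
    apply Finset.sum_congr rfl
    intro i _
    rcases Nat.eq_zero_or_pos i with hi | hi
    · subst hi; norm_num
    · have he : 2*i-1+1 = 2*i := by omega
      have hp' : x^(2*i) = x^(2*i-1) * x := by rw [← pow_succ, he]
      rw [hp']
      ring
  have e4 : (2*(m:ℝ)+2) * hp m x
      = ∑ i ∈ range (m+1), (2*(m:ℝ)+2) * (bp m i * x^(2*i)) := by
    rw [hp_eq, Finset.mul_sum]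
  rw [e2, e1, e3, e4, Finset.sum_range_succ _ m, Finset.sum_range_succ _ m,
    Finset.sum_range_succ _ m]
  rw [← add_assoc, ← Finset.sum_add_distrib]
  have e5 : ∑ i ∈ range m, ((2*(i:ℝ)+2) * (2*(i:ℝ)+1) * bp m (i+1) * x^(2*i)
      + 2*(2*(i:ℝ)+1) * ap m i * x^(2*i))
      = ∑ i ∈ range m, ((2*(i:ℝ)) * bp m i * x^(2*i)
      + (2*(m:ℝ)+2) * (bp m i * x^(2*i))) := by
    apply Finset.sum_congr rfl
    intro i hi
    have := L2 m i (mem_range.1 hi)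
    linear_combination x^(2*i) * this
  rw [e5, Finset.sum_add_distrib]
  rw [ap_self, bp_self]
  ring

lemma L3a (m : ℕ) : ap (m+1) 0 = (2*(m:ℝ)+3) * ap m 0 := by
  unfold ap
  rw [Nat.sub_zero, Nat.sub_zero]
  rw [show 2*(m+1)+1 = (2*m+1)+1+1 from by omega, Nat.factorial_succ ((2*m+1)+1),
    Nat.factorial_succ (2*m+1)]
  rw [show 2*(m+1) = 2*m+2 from by omega, Nat.doubleFactorial_add_two]
  push_cast
  have h1 : ((2*m)‼ : ℝ) ≠ 0 := by exact_mod_cast (Nat.doubleFactorial_pos _).ne'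
  have h2 : ((2*0+1)! : ℝ) ≠ 0 := by exact_mod_cast (Nat.factorial_pos _).ne'
  field_simp
  ring

lemma L3 (m i : ℕ) (h : i < m) :
    (2*(i:ℝ)+3) * ap (m+1) (i+1)
      = (2*(m:ℝ)+3) * ((2*(i:ℝ)+3) * ap m (i+1) + ap m i) := by
  obtain ⟨k, rfl⟩ : ∃ k, m = i + 1 + k := ⟨m - i - 1, by omega⟩
  unfold ap
  rw [show i+1+k+1-(i+1) = k+1 from by omega, show i+1+k-(i+1) = k from by omega,
    show i+1+k-i = k+1 from by omega]
  rw [show 2*(i+1+k+1)+1 = (2*(i+1+k)+1)+1+1 from by omega,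
    Nat.factorial_succ ((2*(i+1+k)+1)+1), Nat.factorial_succ (2*(i+1+k)+1)]
  rw [show 2*(i+1)+1 = (2*i+1)+1+1 from by omega, Nat.factorial_succ ((2*i+1)+1),
    Nat.factorial_succ (2*i+1)]
  rw [show 2*(k+1) = 2*k+2 from by omega, Nat.doubleFactorial_add_two]
  push_cast
  have h1 : ((2*k)‼ : ℝ) ≠ 0 := by exact_mod_cast (Nat.doubleFactorial_pos _).ne'
  have h2 : ((2*i+1)! : ℝ) ≠ 0 := by exact_mod_cast (Nat.factorial_pos _).ne'
  field_simp
  ring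

lemma idIII (m : ℕ) (x : ℝ) : gp1 (m+1) x = (2*(m:ℝ)+3) * (gp1 m x + x * gp m x) := by
  have eA : gp1 (m+1) x
      = (∑ i ∈ range (m+1), (2*((i+1:ℕ):ℝ)+1) * ap (m+1) (i+1) * x^(2*(i+1)))
        + ap (m+1) 0 := by
    unfold gp1
    rw [Finset.sum_range_succ']
    norm_num
  have eB : (2*(m:ℝ)+3) * gp1 m x
      = (∑ i ∈ range m, (2*(m:ℝ)+3) * ((2*((i+1:ℕ):ℝ)+1) * ap m (i+1) * x^(2*(i+1))))
        + (2*(m:ℝ)+3) * ap m 0 := by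
    unfold gp1
    rw [Finset.mul_sum, Finset.sum_range_succ']
    norm_num
  have eC : (2*(m:ℝ)+3) * (x * gp m x)
      = ∑ i ∈ range (m+1), (2*(m:ℝ)+3) * (ap m i * x^(2*(i+1))) := by
    rw [gp_eq, Finset.mul_sum, Finset.mul_sum]
    apply Finset.sum_congr rfl
    intro i _
    have : 2*(i+1) = (2*i+1)+1 := by omega
    rw [this, pow_succ]
    ring
  rw [mul_add, eA, eB, eC, Finset.sum_range_succ _ m, Finset.sum_range_succ _ m]
  rw [ap_self, ap_self]
  have e5 : ∑ i ∈ range m, (2*((i+1:ℕ):ℝ)+1) * ap (m+1) (i+1) * x^(2*(i+1))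
      = ∑ i ∈ range m, ((2*(m:ℝ)+3) * ((2*((i+1:ℕ):ℝ)+1) * ap m (i+1) * x^(2*(i+1)))
        + (2*(m:ℝ)+3) * (ap m (i+1-1) * x^(2*(i+1)))) := by
    apply Finset.sum_congr rfl
    intro i hi
    have hL := L3 m i (mem_range.1 hi)
    have hs : i+1-1 = i := by omega
    rw [hs]
    push_cast
    linear_combination x^(2*(i+1)) * hL
  rw [e5, Finset.sum_add_distrib]
  have e6 : ∑ i ∈ range m, (2*(m:ℝ)+3) * (ap m (i+1-1) * x^(2*(i+1)))
      = ∑ i ∈ range m, (2*(m:ℝ)+3) * (ap m i * x^(2*(i+1))) := by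
    apply Finset.sum_congr rfl; intro i _; norm_num
  rw [e6, L3a]
  push_cast
  ring

lemma sum_choose_add_two (N : ℕ) : ∀ K : ℕ,
    ∑ j ∈ range (K+2), ((N+2).choose j : ℝ)
      = ∑ j ∈ range (K+2), (N.choose j : ℝ) + 2*∑ j ∈ range (K+1), (N.choose j : ℝ)
        + ∑ j ∈ range K, (N.choose j : ℝ) := by
  intro K
  induction K with
  | zero =>
    simp [Finset.sum_range_succ]
    push_cast
    ring
  | succ L ih =>
    rw [show L+1+2 = (L+2)+1 from by omega, Finset.sum_range_succ, ih]
    have hp2 : ((N+2).choose (L+2)) = N.choose (L+2) + 2 * N.choose (L+1) + N.choose L := by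
      rw [show N+2 = (N+1)+1 from by omega, show L+2 = (L+1)+1 from by omega,
        Nat.choose_succ_succ (N+1) (L+1), Nat.choose_succ_succ N (L+1),
        Nat.choose_succ_succ N L]
      ring
    simp only [Finset.sum_range_succ]
    push_cast [hp2]
    ring

lemma L4B (i k : ℕ) :
    4 * bq (i+1+k+1) i + (2*((i:ℝ)+1+k)+3)*(2*(i:ℝ)+2)*bq (i+1+k) (i+1)
      = 4*(2*(i:ℝ)+2)*bq (i+1+k+1) (i+1) := by
  unfold bq
  rw [show i+1+k+1-i = (k+1)+1 from by omega,
      show i+1+k+1+i = (2*i+k+1)+1 from by omega,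
      show i+1+k-(i+1) = k from by omega,
      show i+1+k+(i+1) = (2*i+k+1)+1 from by omega,
      show i+1+k+1+(i+1) = ((2*i+k+1)+1)+1 from by omega,
      show i+1+k+1-(i+1) = k+1 from by omega]
  rw [Nat.factorial_succ ((2*i+k+1)+1), Nat.factorial_succ (2*i+k+1)]
  rw [show 2*(i+1) = (2*i+1)+1 from by omega, Nat.factorial_succ (2*i+1),
      Nat.factorial_succ (2*i)]
  rw [Nat.factorial_succ (k+1), Nat.factorial_succ k]
  rw [show 2*((k+1)+1) = (2*k+2)+2 from by omega, Nat.doubleFactorial_add_two (2*k+2),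
      show 2*(k+1) = 2*k+2 from by omega, Nat.doubleFactorial_add_two (2*k)]
  push_cast
  have h1 : ((2*k)‼ : ℝ) ≠ 0 := by exact_mod_cast (Nat.doubleFactorial_pos _).ne'
  have h2 : ((2*i)! : ℝ) ≠ 0 := by exact_mod_cast (Nat.factorial_pos _).ne'
  have h3 : ((k)! : ℝ) ≠ 0 := by exact_mod_cast (Nat.factorial_pos _).ne'
  have h4 : ((2*i+k+1)! : ℝ) ≠ 0 := by exact_mod_cast (Nat.factorial_pos _).ne'
  field_simp
  ring

lemma L4C (i k : ℕ) :
    bq (i+1+k+1) i * (4*((2*(i+1+k)+1).choose k : ℝ) + 3*((2*(i+1+k)+1).choose (k+1) : ℝ)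
        + ((2*(i+1+k)+1).choose (k+2) : ℝ))
      + (2*((i:ℝ)+1+k)+3)*(2*(i:ℝ)+2)*bq (i+1+k) (i+1) * ((2*(i+1+k)+1).choose k : ℝ)
      + (2*((i:ℝ)+1+k)+3) * ap (i+1+k) i
      = (2*(i:ℝ)+2)*bq (i+1+k+1) (i+1) * (3*((2*(i+1+k)+1).choose k : ℝ)
          + ((2*(i+1+k)+1).choose (k+1) : ℝ))
        + ap (i+1+k+1) i := by
  unfold bq ap
  rw [show i+1+k+1-i = (k+1)+1 from by omega,
      show i+1+k+1+i = (2*i+k+1)+1 from by omega,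
      show i+1+k-(i+1) = k from by omega,
      show i+1+k+(i+1) = (2*i+k+1)+1 from by omega,
      show i+1+k-i = k+1 from by omega,
      show i+1+k+1+(i+1) = ((2*i+k+1)+1)+1 from by omega,
      show i+1+k+1-(i+1) = k+1 from by omega]
  rw [Nat.cast_choose ℝ (show k ≤ 2*(i+1+k)+1 from by omega),
      Nat.cast_choose ℝ (show k+1 ≤ 2*(i+1+k)+1 from by omega),
      Nat.cast_choose ℝ (show k+2 ≤ 2*(i+1+k)+1 from by omega)]
  rw [show 2*(i+1+k)+1-k = ((2*i+k+1)+1)+1 from by omega,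
      show 2*(i+1+k)+1-(k+1) = (2*i+k+1)+1 from by omega,
      show 2*(i+1+k)+1-(k+2) = 2*i+k+1 from by omega]
  rw [show 2*(i+1+k+1)+1 = ((2*(i+1+k)+1)+1)+1 from by omega,
      Nat.factorial_succ ((2*(i+1+k)+1)+1), Nat.factorial_succ (2*(i+1+k)+1)]
  rw [Nat.factorial_succ ((2*i+k+1)+1), Nat.factorial_succ (2*i+k+1)]
  rw [show 2*(i+1) = (2*i+1)+1 from by omega, Nat.factorial_succ (2*i+1),
      Nat.factorial_succ (2*i)]
  rw [show k+2 = (k+1)+1 from by omega, Nat.factorial_succ (k+1), Nat.factorial_succ k]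
  rw [show 2*((k+1)+1) = (2*k+2)+2 from by omega, Nat.doubleFactorial_add_two (2*k+2),
      show 2*(k+1) = 2*k+2 from by omega, Nat.doubleFactorial_add_two (2*k)]
  push_cast
  have h1 : ((2*k)‼ : ℝ) ≠ 0 := by exact_mod_cast (Nat.doubleFactorial_pos _).ne'
  have h2 : ((2*i)! : ℝ) ≠ 0 := by exact_mod_cast (Nat.factorial_pos _).ne'
  have h3 : ((k)! : ℝ) ≠ 0 := by exact_mod_cast (Nat.factorial_pos _).ne'
  have h4 : ((2*i+k+1)! : ℝ) ≠ 0 := by exact_mod_cast (Nat.factorial_pos _).ne'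
  have h5 : ((2*(i+1+k)+1)! : ℝ) ≠ 0 := by exact_mod_cast (Nat.factorial_pos _).ne'
  field_simp
  ring

lemma L4 (m i : ℕ) (h : i < m) :
    bp (m+1) i + (2*(m:ℝ)+3)*(2*(i:ℝ)+2)*bp m (i+1) + (2*(m:ℝ)+3)*ap m i
      = (2*(i:ℝ)+2)*bp (m+1) (i+1) + ap (m+1) i := by
  obtain ⟨k, rfl⟩ : ∃ k, m = i + 1 + k := ⟨m - i - 1, by omega⟩
  rw [bp_eq, bp_eq, bp_eq]
  unfold Sp
  rw [show i+1+k+1-i = k+2 from by omega,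
      show i+1+k-(i+1) = k from by omega,
      show i+1+k+1-(i+1) = k+1 from by omega]
  rw [show 2*(i+1+k+1)+1 = (2*(i+1+k)+1)+2 from by omega]
  rw [show k+2+1 = (k+1)+2 from by omega, show k+1+1 = k+2 from by omega]
  rw [sum_choose_add_two (2*(i+1+k)+1) (k+1), sum_choose_add_two (2*(i+1+k)+1) k]
  have r1 : ∑ j ∈ range (k+1), ((2*(i+1+k)+1).choose j : ℝ)
      = ∑ j ∈ range k, ((2*(i+1+k)+1).choose j : ℝ) + ((2*(i+1+k)+1).choose k : ℝ) := by
    rw [Finset.sum_range_succ]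
  have r2 : ∑ j ∈ range (k+2), ((2*(i+1+k)+1).choose j : ℝ)
      = ∑ j ∈ range k, ((2*(i+1+k)+1).choose j : ℝ) + ((2*(i+1+k)+1).choose k : ℝ)
        + ((2*(i+1+k)+1).choose (k+1) : ℝ) := by
    rw [show k+2 = (k+1)+1 from by omega, Finset.sum_range_succ, r1]
  have r3 : ∑ j ∈ range (k+1+2), ((2*(i+1+k)+1).choose j : ℝ)
      = ∑ j ∈ range k, ((2*(i+1+k)+1).choose j : ℝ) + ((2*(i+1+k)+1).choose k : ℝ)
        + ((2*(i+1+k)+1).choose (k+1) : ℝ) + ((2*(i+1+k)+1).choose (k+2) : ℝ) := by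
    rw [show k+1+2 = (k+2)+1 from by omega, Finset.sum_range_succ, r2]
  rw [r3, r2, r1]
  have hB := L4B i k
  have hC := L4C i k
  push_cast
  linear_combination (∑ j ∈ range k, ((2*(i+1+k)+1).choose j : ℝ)) * hB + hC

lemma L4edge (m : ℕ) :
    bp (m+1) m + (2*(m:ℝ)+3) * ap m m = (2*((m:ℝ)+1)) * bp (m+1) (m+1) + ap (m+1) m := by
  rw [ap_self, bp_self]
  unfold bp ap Sp
  rw [show m+1-m = 1 from by omega, show m+1+m = (2*m)+1 from by omega]
  rw [Finset.sum_range_succ, Finset.sum_range_one, Nat.choose_zero_right,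
    Nat.choose_one_right]
  rw [show 2*(m+1)+1 = ((2*m+1)+1)+1 from by omega, Nat.factorial_succ ((2*m+1)+1),
    Nat.factorial_succ (2*m+1), Nat.factorial_succ (2*m)]
  rw [show 2*1 = 2 from rfl, show (Nat.doubleFactorial 2) = 2 from rfl]
  push_cast
  have h2 : ((2*m)! : ℝ) ≠ 0 := by exact_mod_cast (Nat.factorial_pos _).ne'
  field_simp
  ring

lemma idIV (m : ℕ) (x : ℝ) :
    x * hp (m+1) x + (2*(m:ℝ)+3) * (hp1 m x + gp m x) = hp1 (m+1) x + gp (m+1) x := by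
  have P1 : x * hp (m+1) x = ∑ i ∈ range (m+2), bp (m+1) i * x^(2*i+1) := by
    rw [hp_eq, Finset.mul_sum]
    apply Finset.sum_congr rfl
    intro i _
    rw [pow_succ]; ring
  have P2 : (2*(m:ℝ)+3) * hp1 m x
      = ∑ i ∈ range m, (2*(m:ℝ)+3)*((2*((i:ℝ)+1)) * bp m (i+1) * x^(2*i+1)) := by
    unfold hp1
    rw [Finset.mul_sum, Finset.sum_range_succ']
    have h0 : (2*(m:ℝ)+3)*((2*((0:ℕ):ℝ)) * bp m 0 * x^(2*0-1)) = 0 := by norm_num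
    rw [h0, add_zero]
    apply Finset.sum_congr rfl
    intro i _
    have he : 2*(i+1)-1 = 2*i+1 := by omega
    rw [he]
    push_cast; ring
  have P3 : (2*(m:ℝ)+3) * gp m x
      = ∑ i ∈ range (m+1), (2*(m:ℝ)+3)*(ap m i * x^(2*i+1)) := by
    rw [gp_eq, Finset.mul_sum]
  have P4 : hp1 (m+1) x
      = ∑ i ∈ range (m+1), (2*((i:ℝ)+1)) * bp (m+1) (i+1) * x^(2*i+1) := by
    unfold hp1
    rw [Finset.sum_range_succ']
    have h0 : (2*((0:ℕ):ℝ)) * bp (m+1) 0 * x^(2*0-1) = 0 := by norm_num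
    rw [h0, add_zero]
    apply Finset.sum_congr rfl
    intro i _
    have he : 2*(i+1)-1 = 2*i+1 := by omega
    rw [he]
    push_cast; ring
  rw [mul_add, P1, P2, P3, P4, gp_eq (m+1)]
  rw [show m+2 = (m+1)+1 from by omega]
  rw [Finset.sum_range_succ (fun i => bp (m+1) i * x^(2*i+1)) (m+1),
      Finset.sum_range_succ (fun i => bp (m+1) i * x^(2*i+1)) m,
      Finset.sum_range_succ (fun i => (2*(m:ℝ)+3)*(ap m i * x^(2*i+1))) m,
      Finset.sum_range_succ (fun i => (2*((i:ℝ)+1)) * bp (m+1) (i+1) * x^(2*i+1)) m,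
      Finset.sum_range_succ (fun i => ap (m+1) i * x^(2*i+1)) (m+1),
      Finset.sum_range_succ (fun i => ap (m+1) i * x^(2*i+1)) m]
  have e5 : ∑ i ∈ range m, (bp (m+1) i * x^(2*i+1)
        + (2*(m:ℝ)+3)*((2*((i:ℝ)+1)) * bp m (i+1) * x^(2*i+1))
        + (2*(m:ℝ)+3)*(ap m i * x^(2*i+1)))
      = ∑ i ∈ range m, ((2*((i:ℝ)+1)) * bp (m+1) (i+1) * x^(2*i+1)
        + ap (m+1) i * x^(2*i+1)) := by
    apply Finset.sum_congr rfl
    intro i hi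
    have hL := L4 m i (mem_range.1 hi)
    linear_combination x^(2*i+1) * hL
  rw [Finset.sum_add_distrib, Finset.sum_add_distrib, Finset.sum_add_distrib] at e5
  have hEdge := L4edge m
  rw [ap_self, bp_self] at hEdge
  rw [ap_self (m+1), bp_self (m+1), ap_self m]
  linear_combination e5 + x^(2*m+1) * hEdge

lemma id_base1 (x : ℝ) : gp1 0 x = 1 := by
  unfold gp1 ap
  rw [Finset.sum_range_one]
  norm_num

lemma id_base2 (x : ℝ) : x * hp 0 x - hp1 0 x - gp 0 x = 0 := by
  rw [hp_eq, gp_eq]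
  unfold hp1
  rw [Finset.sum_range_one, Finset.sum_range_one, Finset.sum_range_one]
  rw [bp_self]
  unfold ap
  norm_num

lemma Em_hasDeriv (m : ℕ) (x : ℝ) :
    HasDerivAt (Em m)
      (gp1 m x * G x + (x * hp m x - hp1 m x - gp m x) * Real.exp (-x^2/2)) x := by
  have h1 := (gp_hasDeriv m x).mul (G_hasDeriv x)
  have h2 := (hp_hasDeriv m x).mul (gaussfn_hasDeriv x)
  have := h1.fun_sub h2
  exact this.congr_deriv (by ring)

lemma Dm_hasDeriv (m : ℕ) (x : ℝ) :
    HasDerivAt (Dm m) ((2*(m:ℝ)+2) * Em m x) x := by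
  have hq := (gp1_hasDeriv m x).add ((hasDerivAt_id' x).mul (gp_hasDeriv m x))
  have hp' : HasDerivAt (fun y => hp1 m y + gp m y) (hp2 m x + gp1 m x) x :=
    (hp1_hasDeriv m x).add (gp_hasDeriv m x)
  have h1 := hq.mul (G_hasDeriv x)
  have h2 := hp'.mul (gaussfn_hasDeriv x)
  have hraw := h1.fun_sub h2
  refine hraw.congr_deriv ?_
  have e1 := idI m x
  have e2 := idII m x
  unfold Em
  simp only [Pi.add_apply, Pi.mul_apply]
  linear_combination (G x) * e1 - Real.exp (-x^2/2) * e2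

lemma nonpos_of_tendsto (f f' : ℝ → ℝ) (hd : ∀ y, HasDerivAt f (f' y) y)
    (h0 : ∀ y, 0 ≤ f' y) (hl : Filter.Tendsto f atTop (nhds 0)) : ∀ y, f y ≤ 0 := by
  have mono : Monotone f :=
    monotone_of_deriv_nonneg (fun y => (hd y).differentiableAt)
      (fun y => by rw [(hd y).deriv]; exact h0 y)
  intro y
  apply ge_of_tendsto hl
  filter_upwards [Filter.eventually_ge_atTop y] with z hz
  exact mono hz

lemma nonneg_of_tendsto (f f' : ℝ → ℝ) (hd : ∀ y, HasDerivAt f (f' y) y)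
    (h0 : ∀ y, f' y ≤ 0) (hl : Filter.Tendsto f atTop (nhds 0)) : ∀ y, 0 ≤ f y := by
  have anti : Antitone f :=
    antitone_of_deriv_nonpos (fun y => (hd y).differentiableAt)
      (fun y => by rw [(hd y).deriv]; exact h0 y)
  intro y
  apply le_of_tendsto hl
  filter_upwards [Filter.eventually_ge_atTop y] with z hz
  exact anti hz

lemma main (m : ℕ) : (∀ x, Em m x ≤ 0) ∧ (∀ x, 0 ≤ Dm m x) := by
  induction m with
  | zero =>
    have hE : ∀ x, Em 0 x ≤ 0 := by
      apply nonpos_of_tendsto (Em 0) (fun y => G y) _ _ (tendsto_Em 0)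
      · intro y
        have := Em_hasDeriv 0 y
        rw [id_base1 y] at this
        have h2 := id_base2 y
        rw [h2] at this
        simpa using this
      · exact fun y => G_nonneg y
    refine ⟨hE, ?_⟩
    apply nonneg_of_tendsto (Dm 0) (fun y => (2*((0:ℕ):ℝ)+2) * Em 0 y)
      (fun y => Dm_hasDeriv 0 y) _ (tendsto_Dm 0)
    intro y
    have h := hE y
    norm_num
    linarith
  | succ k ih =>
    have hE : ∀ x, Em (k+1) x ≤ 0 := by
      apply nonpos_of_tendsto (Em (k+1)) (fun y => (2*(k:ℝ)+3) * Dm k y) _ _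
        (tendsto_Em (k+1))
      · intro y
        have hraw := Em_hasDeriv (k+1) y
        have e3 := idIII k y
        have e4 := idIV k y
        have : gp1 (k+1) y * G y + (y * hp (k+1) y - hp1 (k+1) y - gp (k+1) y)
            * Real.exp (-y^2/2) = (2*(k:ℝ)+3) * Dm k y := by
          unfold Dm
          linear_combination (G y) * e3 + Real.exp (-y^2/2) * e4
        rw [this] at hraw
        exact hraw
      · intro y
        have := ih.2 y
        positivity
    refine ⟨hE, ?_⟩
    apply nonneg_of_tendsto (Dm (k+1)) (fun y => (2*(((k+1):ℕ):ℝ)+2) * Em (k+1) y)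
      (fun y => Dm_hasDeriv (k+1) y) _ (tendsto_Dm (k+1))
    intro y
    have h := hE y
    have hk : (0:ℝ) ≤ (k:ℝ) := Nat.cast_nonneg k
    push_cast
    nlinarith

lemma ap_pos (m i : ℕ) : 0 < ap m i := by
  unfold ap
  apply _root_.div_pos
  · exact_mod_cast Nat.factorial_pos _
  · apply mul_pos
    · exact_mod_cast Nat.doubleFactorial_pos _
    · exact_mod_cast Nat.factorial_pos _

lemma gp_pos (m : ℕ) (x : ℝ) (hx : 0 < x) : 0 < gp m x := by
  rw [gp_eq]
  apply Finset.sum_pos _ (by simp)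
  intro i _
  have := ap_pos m i
  positivity

lemma gp1_pos (m : ℕ) (x : ℝ) (hx : 0 < x) : 0 < gp1 m x := by
  unfold gp1
  apply Finset.sum_pos _ (by simp)
  intro i _
  have := ap_pos m i
  have : (0:ℝ) < 2*(i:ℝ)+1 := by positivity
  have := ap_pos m i
  positivity

theorem stmt6 (n : ℕ) (hn : 1 ≤ n) (x : ℝ) (hx : 0 < x) :
    (deriv (hp (n-1)) x + gp (n-1) x) / (deriv (gp (n-1)) x + x * gp (n-1) x)
        * Real.exp (-x^2/2)
      ≤ ∫ t in Set.Ioi x, Real.exp (-t^2/2) := by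
  set m := n - 1 with hm
  have hd1 : deriv (hp m) x = hp1 m x := (hp_hasDeriv m x).deriv
  have hd2 : deriv (gp m) x = gp1 m x := (gp_hasDeriv m x).deriv
  rw [hd1, hd2]
  have hq : 0 < gp1 m x + x * gp m x := by
    have := gp1_pos m x hx
    have := gp_pos m x hx
    nlinarith
  have hD := (main m).2 x
  unfold Dm at hD
  rw [div_mul_eq_mul_div, div_le_iff₀ hq]
  show (hp1 m x + gp m x) * Real.exp (-x ^ 2 / 2) ≤ G x * (gp1 m x + x * gp m x)
  nlinarith
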